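/- arXiv:2412.14673 — 3 statements merged into one kernel-verified Lean document; each statement's English description precedes it below -/
import Mathlib

section
/- Given groups G, H, a homomorphism φ : G → Aut(H), and natural numbers n, m, the set G × H^n × H^m equipped with the multiplication (g¹,h₁¹,…,hₙ¹,hₙ₊₁¹,…,hₙ₊ₘ¹)·(g²,h₁²,…,hₙ²,hₙ₊₁²,…,hₙ₊ₘ²) = (g¹g², h₁¹·φ_{g¹}(h₁²), …, hₙ¹·φ_{g¹}(hₙ²), φ_{g²}⁻¹(hₙ₊₁¹)·hₙ₊₁², …, φ_{g²}⁻¹(hₙ₊ₘ¹)·hₙ₊ₘ²) is a group. -/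
/-- Multiplication of the type-I semi-direct product extended group of `G, H` by `φ`
with parameters `n, m`. -/
def typeIMul {G H : Type*} [Group G] [Group H] (φ : G →* MulAut H) (n m : ℕ)
    (a b : G × (Fin n → H) × (Fin m → H)) : G × (Fin n → H) × (Fin m → H) :=
  (a.1 * b.1,
   fun i => a.2.1 i * φ a.1 (b.2.1 i),
   fun i => (φ b.1)⁻¹ (a.2.2 i) * b.2.2 i)

/-- `G × H^n × H^m` with the type-I semi-direct product multiplication is a group:
the multiplication is associative, `(1,1,…,1)` is a two-sided identity, and every element has a
two-sided inverse. -/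
theorem typeI_is_group {G H : Type*} [Group G] [Group H] (φ : G →* MulAut H) (n m : ℕ) :
    (∀ a b c : G × (Fin n → H) × (Fin m → H),
        typeIMul φ n m (typeIMul φ n m a b) c = typeIMul φ n m a (typeIMul φ n m b c)) ∧
    (∀ a : G × (Fin n → H) × (Fin m → H),
        typeIMul φ n m ((1 : G), fun _ => (1 : H), fun _ => (1 : H)) a = a ∧
        typeIMul φ n m a ((1 : G), fun _ => (1 : H), fun _ => (1 : H)) = a) ∧
    (∀ a : G × (Fin n → H) × (Fin m → H),
        ∃ b, typeIMul φ n m a b = ((1 : G), fun _ => (1 : H), fun _ => (1 : H)) ∧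
             typeIMul φ n m b a = ((1 : G), fun _ => (1 : H), fun _ => (1 : H))) := by
  refine ⟨fun a b c => ?_, fun a => ⟨?_, ?_⟩, fun a => ?_⟩
  · refine Prod.ext (mul_assoc _ _ _) (Prod.ext ?_ ?_) <;> funext i <;>
      simp [typeIMul, mul_assoc, map_mul, MulAut.mul_apply, MulAut.inv_def]
  · simp [typeIMul]
  · simp [typeIMul]
  · refine ⟨(a.1⁻¹, fun i => φ a.1⁻¹ (a.2.1 i)⁻¹, fun i => (φ a.1 (a.2.2 i))⁻¹), ?_, ?_⟩ <;>
      simp [typeIMul, map_inv, MulAut.inv_def, Prod.ext_iff]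
end

section
/- The map sending (g, h₁,…,hₙ, hₙ₊₁,…,hₙ₊ₘ) ∈ SO(d) ⋉ (ℝ^d)^{n+m} (the type-I semi-direct product extended group with φ the canonical action of SO(d) on ℝ^d) to the block matrix [[R, r],[0, I_{n+m}]] with R = g and r the d×(n+m) matrix whose first n columns are h₁,…,hₙ and whose last m columns are g·hₙ₊₁,…,g·hₙ₊ₘ, is a group isomorphism onto its image in GL(d+n+m, ℝ). -/
open Matrix

/-- `R ∈ SO(d)`: real orthogonal with determinant 1. -/
def isSO {d : ℕ} (R : Matrix (Fin d) (Fin d) ℝ) : Prop :=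
  R * Rᵀ = 1 ∧ R.det = 1

/-- Multiplication of `TFG(d,n,m)`, the type-I semi-direct product extended group of
`G = SO(d)` and `H = ℝ^d` by the canonical action: components `hᵢ¹ + g¹hᵢ²` for `i ≤ n`
and `(g²)⁻¹hᵢ¹ + hᵢ²` for `n < i ≤ n+m`. -/
noncomputable def tfgMul (d n m : ℕ)
    (a b : Matrix (Fin d) (Fin d) ℝ × (Fin n → Fin d → ℝ) × (Fin m → Fin d → ℝ)) :
    Matrix (Fin d) (Fin d) ℝ × (Fin n → Fin d → ℝ) × (Fin m → Fin d → ℝ) :=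
  (a.1 * b.1,
   fun i => a.2.1 i + a.1.mulVec (b.2.1 i),
   fun i => (b.1)⁻¹.mulVec (a.2.2 i) + b.2.2 i)

/-- The matrix embedding of `TFG(d,n,m)` into `GL(d+n+m, ℝ)`: the block matrix
`[[R, r],[0, I]]` where the first `n` columns of `r` are `h₁,…,hₙ` and the last `m`
columns are `g·hₙ₊₁,…,g·hₙ₊ₘ`. -/
def tfgEmbed (d n m : ℕ)
    (a : Matrix (Fin d) (Fin d) ℝ × (Fin n → Fin d → ℝ) × (Fin m → Fin d → ℝ)) :
    Matrix (Fin d ⊕ (Fin n ⊕ Fin m)) (Fin d ⊕ (Fin n ⊕ Fin m)) ℝ :=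
  fromBlocks a.1
    (Matrix.of fun i c => Sum.elim (fun j => a.2.1 j i) (fun j => a.1.mulVec (a.2.2 j) i) c)
    0 1

lemma isSO_inv_mul {d : ℕ} {R : Matrix (Fin d) (Fin d) ℝ} (h : isSO R) :
    R * R⁻¹ = 1 ∧ R⁻¹ * R = 1 := by
  have hu : IsUnit R.det := by rw [h.2]; exact isUnit_one
  exact ⟨Matrix.mul_nonsing_inv R hu, Matrix.nonsing_inv_mul R hu⟩

/-- the map `(g,h₁,…,hₙ₊ₘ) ↦ [[R,r],[0,I]]` is a group isomorphism of
`TFG(d,n,m)` onto its image in `GL(d+n+m,ℝ)`: it is injective on elements with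
`SO(d)`-component and intertwines the type-I multiplication with matrix multiplication. -/
theorem tfg_embed_iso (d n m : ℕ) :
    Set.InjOn (tfgEmbed d n m)
      { a : Matrix (Fin d) (Fin d) ℝ × (Fin n → Fin d → ℝ) × (Fin m → Fin d → ℝ) | isSO a.1 } ∧
    (∀ a b : Matrix (Fin d) (Fin d) ℝ × (Fin n → Fin d → ℝ) × (Fin m → Fin d → ℝ),
        isSO a.1 → isSO b.1 →
        tfgEmbed d n m (tfgMul d n m a b) = tfgEmbed d n m a * tfgEmbed d n m b) := by
  constructor
  · rintro ⟨A, u, v⟩ hA ⟨B, u', v'⟩ hB heq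
    simp only [Set.mem_setOf_eq] at hA hB
    have h1 : A = B := by
      funext i j
      simpa [tfgEmbed, fromBlocks] using congrFun (congrFun heq (Sum.inl i)) (Sum.inl j)
    subst h1
    have h2 : u = u' := by
      funext j i
      simpa [tfgEmbed, fromBlocks] using
        congrFun (congrFun heq (Sum.inl i)) (Sum.inr (Sum.inl j))
    have h3 : v = v' := by
      have hmul : ∀ j, A.mulVec (v j) = A.mulVec (v' j) := by
        intro j
        funext i
        simpa [tfgEmbed, fromBlocks] using
          congrFun (congrFun heq (Sum.inl i)) (Sum.inr (Sum.inr j))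
      funext j
      have := congrArg (A⁻¹.mulVec) (hmul j)
      simpa [Matrix.mulVec_mulVec, (isSO_inv_mul hA).2, Matrix.one_mulVec] using this
    simp [h2, h3]
  · rintro ⟨A, u, v⟩ ⟨B, u', v'⟩ hA hB
    simp only [Set.mem_setOf_eq] at hA hB
    have hBB : B * B⁻¹ = 1 := (isSO_inv_mul hB).1
    rw [tfgEmbed, tfgEmbed, tfgEmbed, Matrix.fromBlocks_multiply]
    simp only [Matrix.mul_zero, Matrix.zero_mul, add_zero, zero_add, Matrix.mul_one,
      Matrix.one_mul]
    ext (i | k) (j | c)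
    · simp [tfgMul]
    · rcases c with j | j
      · simp [tfgMul, Matrix.mul_apply, Matrix.mulVec, dotProduct, add_comm]
      · have key : (A * B).mulVec ((B)⁻¹.mulVec (v j) + v' j)
            = A.mulVec (v j) + A.mulVec (B.mulVec (v' j)) := by
          rw [Matrix.mulVec_add, Matrix.mulVec_mulVec, Matrix.mul_assoc, hBB, Matrix.mul_one,
            Matrix.mulVec_mulVec]
        simp only [tfgMul, Matrix.fromBlocks_apply₁₂, Matrix.of_apply, Sum.elim_inr,
          Matrix.add_apply, key, Pi.add_apply, Matrix.mul_apply]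
        simp only [Matrix.mulVec, dotProduct, Matrix.mul_apply]
        exact add_comm _ _
    · simp [tfgMul]
    · simp [tfgMul]
end

section
/- For the type-II semi-direct product extended group of a group G by φ = C (the inner-automorphism map g ↦ C_g) with parameters s, t, the map (g₁, g₂, …, g_{s+1}, g_{s+2}, …, g_{s+t+1}) ↦ diag(g₁, g₂g₁, g₃g₂g₁, …, g_{s+1}⋯g₂g₁, g₁g_{s+2}, g₁g_{s+2}g_{s+3}, …, g₁g_{s+2}⋯g_{s+t+1}) into block-diagonal matrices with G-valued blocks is an injective group homomorphism, where block-diagonal matrices multiply blockwise. -/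
/-- Left cumulative product: `cumL g l j = l (j-1) * ⋯ * l 0 * g`. -/
def cumL {G : Type*} [Group G] (g : G) (l : ℕ → G) : ℕ → G
  | 0 => g
  | j + 1 => l j * cumL g l j

/-- Right cumulative product: `cumR g r k = g * r 0 * ⋯ * r (k-1)`. -/
def cumR {G : Type*} [Group G] (g : G) (r : ℕ → G) : ℕ → G
  | 0 => g
  | k + 1 => cumR g r k * r k

/-- Multiplication of the type-II semi-direct product extended group of `G` by `φ`
with parameters `s, t`. -/
def typeIIMul {G : Type*} [Group G] (φ : G →* MulAut G) (s t : ℕ)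
    (a b : G × (Fin s → G) × (Fin t → G)) : G × (Fin s → G) × (Fin t → G) :=
  (a.1 * b.1,
   fun j => a.2.1 j *
     φ (cumL a.1 (fun i => if h : i < s then a.2.1 ⟨i, h⟩ else 1) j) (b.2.1 j),
   fun k =>
     (φ (cumR b.1 (fun i => if h : i < t then b.2.2 ⟨i, h⟩ else 1) k))⁻¹ (a.2.2 k) * b.2.2 k)

/-- The block-diagonal embedding: `(g₁,…,g_{s+t+1}) ↦
diag(g₁, g₂g₁, …, g_{s+1}⋯g₂g₁, g₁g_{s+2}, …, g₁g_{s+2}⋯g_{s+t+1})`, into `(s+t+1)`-tuples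
of elements of `G` (block-diagonal matrices with `G`-valued blocks, multiplied blockwise). -/
def blockDiagEmbed {G : Type*} [Group G] (s t : ℕ)
    (a : G × (Fin s → G) × (Fin t → G)) : G × (Fin s → G) × (Fin t → G) :=
  (a.1,
   fun j => cumL a.1 (fun i => if h : i < s then a.2.1 ⟨i, h⟩ else 1) (j + 1),
   fun k => cumR a.1 (fun i => if h : i < t then a.2.2 ⟨i, h⟩ else 1) (k + 1))

lemma cumL_congr {G : Type*} [Group G] {g g' : G} {l l' : ℕ → G} (hg : g = g') (n : ℕ)
    (h : ∀ i < n, l i = l' i) : cumL g l n = cumL g' l' n := by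
  induction n with
  | zero => exact hg
  | succ n ih => simp [cumL, h n (by omega), ih (fun i hi => h i (by omega))]

lemma cumR_congr {G : Type*} [Group G] {g g' : G} {r r' : ℕ → G} (hg : g = g') (n : ℕ)
    (h : ∀ i < n, r i = r' i) : cumR g r n = cumR g' r' n := by
  induction n with
  | zero => exact hg
  | succ n ih => simp [cumR, h n (by omega), ih (fun i hi => h i (by omega))]

lemma cumL_mul {G : Type*} [Group G] (a1 b1 : G) (la lb : ℕ → G) (n : ℕ) :
    cumL (a1 * b1) (fun i => la i * (cumL a1 la i * lb i * (cumL a1 la i)⁻¹)) n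
      = cumL a1 la n * cumL b1 lb n := by
  induction n with
  | zero => rfl
  | succ n ih => simp only [cumL, ih]; group

lemma cumR_mul {G : Type*} [Group G] (a1 b1 : G) (ra rb : ℕ → G) (n : ℕ) :
    cumR (a1 * b1) (fun i => (cumR b1 rb i)⁻¹ * ra i * cumR b1 rb i * rb i) n
      = cumR a1 ra n * cumR b1 rb n := by
  induction n with
  | zero => rfl
  | succ n ih => simp only [cumR, ih]; group

/-- for the type-II extension of `G` by the inner-automorphism map
`φ = C : g ↦ C_g`, the block-diagonal embedding is an injective group homomorphism
into the group of `(s+t+1)`-tuples of elements of `G` under componentwise multiplication. -/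
theorem typeII_conj_blockdiag_embedding {G : Type*} [Group G] (s t : ℕ) :
    Function.Injective (blockDiagEmbed (G := G) s t) ∧
    (∀ a b : G × (Fin s → G) × (Fin t → G),
        blockDiagEmbed s t (typeIIMul (MulAut.conj : G →* MulAut G) s t a b) =
          blockDiagEmbed s t a * blockDiagEmbed s t b) := by
  constructor
  · intro a b h
    simp only [blockDiagEmbed, Prod.mk.injEq] at h
    obtain ⟨h1, h2, h3⟩ := h
    set la : ℕ → G := fun i => if h : i < s then a.2.1 ⟨i, h⟩ else 1 with hla
    set lb : ℕ → G := fun i => if h : i < s then b.2.1 ⟨i, h⟩ else 1 with hlb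
    set ra : ℕ → G := fun i => if h : i < t then a.2.2 ⟨i, h⟩ else 1 with hra
    set rb : ℕ → G := fun i => if h : i < t then b.2.2 ⟨i, h⟩ else 1 with hrb
    have hL : ∀ j : ℕ, j ≤ s → cumL a.1 la j = cumL b.1 lb j := by
      intro j hj
      cases j with
      | zero => exact h1
      | succ m => exact congrFun h2 ⟨m, by omega⟩
    have hR : ∀ k : ℕ, k ≤ t → cumR a.1 ra k = cumR b.1 rb k := by
      intro k hk
      cases k with
      | zero => exact h1
      | succ m => exact congrFun h3 ⟨m, by omega⟩
    refine Prod.ext h1 (Prod.ext ?_ ?_)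
    · funext j
      have e1 : la j.val * cumL a.1 la j.val = lb j.val * cumL b.1 lb j.val := by
        have := hL (j.val + 1) (by omega)
        simpa [cumL] using this
      have e2 := hL j.val (by omega)
      have : la j.val = lb j.val := by
        rw [e2] at e1
        exact mul_right_cancel e1
      simpa [hla, hlb, j.isLt] using this
    · funext k
      have e1 : cumR a.1 ra k.val * ra k.val = cumR b.1 rb k.val * rb k.val := by
        have := hR (k.val + 1) (by omega)
        simpa [cumR] using this
      have e2 := hR k.val (by omega)
      have : ra k.val = rb k.val := by
        rw [e2] at e1
        exact mul_left_cancel e1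
      simpa [hra, hrb, k.isLt] using this
  · intro a b
    set la : ℕ → G := fun i => if h : i < s then a.2.1 ⟨i, h⟩ else 1 with hla
    set lb : ℕ → G := fun i => if h : i < s then b.2.1 ⟨i, h⟩ else 1 with hlb
    set ra : ℕ → G := fun i => if h : i < t then a.2.2 ⟨i, h⟩ else 1 with hra
    set rb : ℕ → G := fun i => if h : i < t then b.2.2 ⟨i, h⟩ else 1 with hrb
    simp only [blockDiagEmbed, typeIIMul, Prod.mk_mul_mk, Prod.mk.injEq, Pi.mul_def]
    refine ⟨trivial, ?_, ?_⟩
    · funext j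
      rw [← cumL_mul a.1 b.1 la lb (j.val + 1)]
      refine cumL_congr rfl _ (fun i hi => ?_)
      have hi' : i < s := by omega
      simp [hla, hlb, hi', MulAut.conj_apply, mul_assoc]
    · funext k
      rw [← cumR_mul a.1 b.1 ra rb (k.val + 1)]
      refine cumR_congr rfl _ (fun i hi => ?_)
      have hi' : i < t := by omega
      simp [hra, hrb, hi', MulAut.conj_apply, MulAut.inv_def,
        MulAut.conj_symm_apply, mul_assoc]
end
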